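/- arXiv:1010.0321 — 4 statements merged into one kernel-verified Lean document; each statement's English description precedes it below -/
import Mathlib

section
/- The braid group B_n is torsion free: for every β ∈ B_n with β ≠ 1 and every integer m ≥ 1, one has β^m ≠ 1. -/
/-- The set of Artin braid relations in the free group on `n - 1` generators:
`σᵢσⱼ = σⱼσᵢ` for `|i - j| > 1` and `σᵢσⱼσᵢ = σⱼσᵢσⱼ` for `|i - j| = 1`. -/
def braidRels (n : ℕ) : Set (FreeGroup (Fin (n - 1))) :=
  { r | (∃ i j : Fin (n - 1), (i : ℕ) + 1 < (j : ℕ) ∧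
          r = FreeGroup.of i * FreeGroup.of j * (FreeGroup.of j * FreeGroup.of i)⁻¹) ∨
        (∃ i j : Fin (n - 1), (j : ℕ) = (i : ℕ) + 1 ∧
          r = FreeGroup.of i * FreeGroup.of j * FreeGroup.of i *
              (FreeGroup.of j * FreeGroup.of i * FreeGroup.of j)⁻¹) }

/-- The braid group on `n` strands, via the Artin presentation. -/
abbrev BraidGroup (n : ℕ) : Type := PresentedGroup (braidRels n)

/-- The standard Artin generator `σᵢ` (`0`-indexed: `i = 0, …, n - 2`). -/
def braidGen (n : ℕ) (i : Fin (n - 1)) : BraidGroup n := PresentedGroup.of i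

/-!
Garside's proof. In the positive braid monoid `B⁺` (positive words modulo the braid relations)
Garside's key lemma holds: if `a u = b v` for generators `a`, `b`, then `u` and `v` are right
multiples of `b` and `a` (if `ab = ba`) or of `ba` and `ab` (if `aba = bab`). Consequently `B⁺`
is cancellative, and two elements with a common multiple have a least common multiple. Every
positive braid divides a power of the quasi-central fundamental braid `Δ`, so common multiples
always exist; hence `B⁺` embeds into `Bₙ` as an Ore monoid, and `x ≤ y ↔ x⁻¹ y ∈ B⁺` is a
left-invariant order on `Bₙ` in which any two elements have a supremum. If `β ^ m = 1`, the
finite set of powers of `β` is invariant under left multiplication by `β`, so its supremum `s`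
satisfies `β s = s`, that is `β = 1`.
-/

theorem IsOfFinOrder.eq_one_of_semilatticeSup {G : Type*} [Group G] [SemilatticeSup G]
    [MulLeftMono G] {g : G} (hg : IsOfFinOrder g) : g = 1 := by
  set S : Set G := ↑(Subgroup.zpowers g)
  have hS : S.Finite := by simpa [S, ← hg.powers_eq_zpowers] using hg.finite_powers
  have hSne : hS.toFinset.Nonempty := hS.toFinset_nonempty.2 ⟨1, one_mem _⟩
  have hlub : IsLUB S (hS.toFinset.sup' hSne id) := by
    simpa using Finset.isLUB_sup' hSne
  have hgS : OrderIso.mulLeft g '' S = S := by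
    simp only [OrderIso.mulLeft_apply, Set.image_mul_left, S]
    ext x
    exact Subgroup.mul_mem_cancel_left _ (Subgroup.inv_mem _ (Subgroup.mem_zpowers g))
  have hglub := (OrderIso.mulLeft g).isLUB_image'.2 hlub
  rw [hgS] at hglub
  exact mul_eq_right.1 (hglub.unique hlub)

section IsLcm

variable {M : Type*} [Monoid M]

def IsLcm (x y m : M) : Prop := x ∣ m ∧ y ∣ m ∧ ∀ z, x ∣ z → y ∣ z → m ∣ z

lemma IsLcm.symm {x y m : M} (h : IsLcm x y m) : IsLcm y x m :=
  ⟨h.2.1, h.1, fun z hy hx => h.2.2 z hx hy⟩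

lemma isLcm_one_left (y : M) : IsLcm 1 y y :=
  ⟨one_dvd y, dvd_rfl, fun _ _ h => h⟩

variable [IsLeftCancelMul M]

lemma mul_dvd_mul_iff_left' (c : M) {x y : M} : c * x ∣ c * y ↔ x ∣ y := by
  refine ⟨fun ⟨d, hd⟩ => ⟨d, mul_left_cancel (a := c) ?_⟩, mul_dvd_mul_left c⟩
  rw [hd, mul_assoc]

lemma isLcm_mul_mul {a b μ x y α β p q j : M} (hμ : IsLcm a b μ) (ha : a * α = μ)
    (hb : b * β = μ) (hp : IsLcm x α (α * p)) (hq : IsLcm y β (β * q)) (hj : IsLcm p q j) :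
    IsLcm (a * x) (b * y) (μ * j) := by
  refine ⟨?_, ?_, ?_⟩
  · rw [← ha, mul_assoc]
    exact mul_dvd_mul_left a (hp.1.trans (mul_dvd_mul_left α hj.1))
  · rw [← hb, mul_assoc]
    exact mul_dvd_mul_left b (hq.1.trans (mul_dvd_mul_left β hj.2.1))
  · intro z hx hy
    obtain ⟨w, rfl⟩ := hμ.2.2 z (dvd_of_mul_right_dvd hx) (dvd_of_mul_right_dvd hy)
    refine mul_dvd_mul_left μ (hj.2.2 w ?_ ?_)
    · rw [← ha, mul_assoc, mul_dvd_mul_iff_left'] at hx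
      exact (mul_dvd_mul_iff_left' α).1 (hp.2.2 _ hx (dvd_mul_right _ _))
    · rw [← hb, mul_assoc, mul_dvd_mul_iff_left'] at hy
      exact (mul_dvd_mul_iff_left' β).1 (hq.2.2 _ hy (dvd_mul_right _ _))

end IsLcm

namespace BraidMonoid

variable {k : ℕ}

def Distant (a b : Fin k) : Prop := a.val + 1 < b.val ∨ b.val + 1 < a.val

def Adjacent (a b : Fin k) : Prop := a.val + 1 = b.val ∨ b.val + 1 = a.val

instance (a b : Fin k) : Decidable (Distant a b) := inferInstanceAs (Decidable (_ ∨ _))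

lemma Distant.symm {a b : Fin k} (h : Distant a b) : Distant b a := Or.symm h

lemma Adjacent.symm {a b : Fin k} (h : Adjacent a b) : Adjacent b a := Or.symm h

lemma Distant.ne {a b : Fin k} (h : Distant a b) : a ≠ b := by
  rintro rfl; unfold Distant at h; omega

lemma Adjacent.ne {a b : Fin k} (h : Adjacent a b) : a ≠ b := by
  rintro rfl; unfold Adjacent at h; omega

lemma Adjacent.not_distant {a b : Fin k} (h : Adjacent a b) : ¬ Distant a b := by
  unfold Adjacent Distant at *; omega

lemma distant_or_adjacent_of_ne {a b : Fin k} (h : a ≠ b) : Distant a b ∨ Adjacent a b := by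
  have := Fin.val_ne_of_ne h
  unfold Distant Adjacent; omega

inductive Step : List (Fin k) → List (Fin k) → Prop
  | swap (x y : List (Fin k)) {a b : Fin k} (h : Distant a b) :
      Step (x ++ a :: b :: y) (x ++ b :: a :: y)
  | braid (x y : List (Fin k)) {a b : Fin k} (h : Adjacent a b) :
      Step (x ++ a :: b :: a :: y) (x ++ b :: a :: b :: y)

def WordEquiv : List (Fin k) → List (Fin k) → Prop := Relation.ReflTransGen Step

infix:50 " ≈ᵇ " => WordEquiv

namespace Step

variable {u v : List (Fin k)}

lemma symm (h : Step u v) : Step v u := by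
  cases h with
  | swap x y h => exact .swap x y h.symm
  | braid x y h => exact .braid x y h.symm

lemma append_left (x : List (Fin k)) (h : Step u v) : Step (x ++ u) (x ++ v) := by
  cases h with
  | swap x' y h => simpa using swap (x ++ x') y h
  | braid x' y h => simpa using braid (x ++ x') y h

lemma append_right (h : Step u v) (y : List (Fin k)) : Step (u ++ y) (v ++ y) := by
  cases h with
  | swap x y' h => simpa using swap x (y' ++ y) h
  | braid x y' h => simpa using braid x (y' ++ y) h

lemma reverse (h : Step u v) : Step u.reverse v.reverse := by
  cases h with
  | swap x y h => simpa using swap y.reverse x.reverse h.symm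
  | braid x y h => simpa using braid y.reverse x.reverse h

lemma length_eq (h : Step u v) : u.length = v.length := by
  cases h <;> simp

lemma cons_cases {a : Fin k} {u z : List (Fin k)} (h : Step (a :: u) z) :
    (∃ u', z = a :: u' ∧ Step u u') ∨
    (∃ e t, Distant a e ∧ u = e :: t ∧ z = e :: a :: t) ∨
    (∃ e t, Adjacent a e ∧ u = e :: a :: t ∧ z = e :: a :: e :: t) := by
  generalize hw : a :: u = w at h
  rcases h with ⟨_ | ⟨c, x⟩, y, h⟩ | ⟨_ | ⟨c, x⟩, y, h⟩ <;>
    simp only [List.nil_append, List.cons_append] at hw ⊢ <;>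
    obtain ⟨rfl, rfl⟩ := List.cons.inj hw
  · exact .inr (.inl ⟨_, _, h, rfl, rfl⟩)
  · exact .inl ⟨_, rfl, .swap x y h⟩
  · exact .inr (.inr ⟨_, _, h, rfl, rfl⟩)
  · exact .inl ⟨_, rfl, .braid x y h⟩

end Step

namespace WordEquiv

variable {u v w : List (Fin k)}

@[refl] lemma refl (u : List (Fin k)) : u ≈ᵇ u := Relation.ReflTransGen.refl

lemma trans (h₁ : u ≈ᵇ v) (h₂ : v ≈ᵇ w) : u ≈ᵇ w :=
  Relation.ReflTransGen.trans h₁ h₂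

lemma of_step (h : Step u v) : u ≈ᵇ v := .single h

lemma symm (h : u ≈ᵇ v) : v ≈ᵇ u := by
  induction h with
  | refl => rfl
  | tail _ hs ih => exact (of_step hs.symm).trans ih

lemma append_left (x : List (Fin k)) (h : u ≈ᵇ v) : x ++ u ≈ᵇ x ++ v :=
  Relation.ReflTransGen.lift (x ++ ·) (fun _ _ => Step.append_left x) _ _ h

lemma append_right (h : u ≈ᵇ v) (y : List (Fin k)) : u ++ y ≈ᵇ v ++ y :=
  Relation.ReflTransGen.lift (· ++ y) (fun _ _ h => Step.append_right h y) _ _ h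

lemma append {u' v' : List (Fin k)} (h : u ≈ᵇ u') (h' : v ≈ᵇ v') : u ++ v ≈ᵇ u' ++ v' :=
  (h.append_right v).trans (h'.append_left u')

lemma cons (a : Fin k) (h : u ≈ᵇ v) : a :: u ≈ᵇ a :: v := h.append_left [a]

lemma reverse (h : u ≈ᵇ v) : u.reverse ≈ᵇ v.reverse :=
  Relation.ReflTransGen.lift List.reverse (fun _ _ => Step.reverse) _ _ h

instance : Trans (WordEquiv (k := k)) WordEquiv WordEquiv := ⟨trans⟩

lemma length_eq (h : u ≈ᵇ v) : u.length = v.length := by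
  induction h with
  | refl => rfl
  | tail _ hs ih => exact ih.trans hs.length_eq

end WordEquiv

/-- `a :: complement a b` spells the least common right multiple of the generators `a` and `b`. -/
def complement (a b : Fin k) : List (Fin k) :=
  if a = b then [] else if Distant a b then [b] else [b, a]

@[simp] lemma complement_self (a : Fin k) : complement a a = [] := if_pos rfl

lemma complement_of_distant {a b : Fin k} (h : Distant a b) : complement a b = [b] := by
  simp [complement, h.ne, h]

lemma complement_of_adjacent {a b : Fin k} (h : Adjacent a b) : complement a b = [b, a] := by
  simp [complement, h.ne, h.not_distant]

lemma cons_complement_equiv (a b : Fin k) : a :: complement a b ≈ᵇ b :: complement b a := by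
  obtain rfl | hab := eq_or_ne a b
  · rfl
  rcases distant_or_adjacent_of_ne hab with h | h
  · rw [complement_of_distant h, complement_of_distant h.symm]
    exact .of_step (.swap [] [] h)
  · rw [complement_of_adjacent h, complement_of_adjacent h.symm]
    exact .of_step (.braid [] [] h)

def FactorsThroughLcm (a : Fin k) (u : List (Fin k)) (b : Fin k) (v : List (Fin k)) : Prop :=
  ∃ w, u ≈ᵇ complement a b ++ w ∧ v ≈ᵇ complement b a ++ w

section FactorsThroughLcm

variable {a b : Fin k} {u v : List (Fin k)}

lemma factorsThroughLcm_self_iff : FactorsThroughLcm a u a v ↔ u ≈ᵇ v := by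
  simp only [FactorsThroughLcm, complement_self, List.nil_append]
  exact ⟨fun ⟨_, hu, hv⟩ => hu.trans hv.symm, fun h => ⟨v, h, .refl v⟩⟩

lemma factorsThroughLcm_iff_of_distant (h : Distant a b) :
    FactorsThroughLcm a u b v ↔ ∃ w, u ≈ᵇ b :: w ∧ v ≈ᵇ a :: w := by
  simp [FactorsThroughLcm, complement_of_distant h, complement_of_distant h.symm]

lemma factorsThroughLcm_iff_of_adjacent (h : Adjacent a b) :
    FactorsThroughLcm a u b v ↔ ∃ w, u ≈ᵇ b :: a :: w ∧ v ≈ᵇ a :: b :: w := by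
  simp [FactorsThroughLcm, complement_of_adjacent h, complement_of_adjacent h.symm]

lemma FactorsThroughLcm.of_equiv_left {u' : List (Fin k)} (h : FactorsThroughLcm a u' b v)
    (hu : u ≈ᵇ u') : FactorsThroughLcm a u b v :=
  let ⟨w, h₁, h₂⟩ := h; ⟨w, hu.trans h₁, h₂⟩

end FactorsThroughLcm

variable (k) in
def LcmPropertyBelow (N : ℕ) : Prop :=
  ∀ (a b : Fin k) (u v : List (Fin k)), u.length < N → a :: u ≈ᵇ b :: v →
    FactorsThroughLcm a u b v

namespace LcmPropertyBelow

variable {N : ℕ} {a b e : Fin k} {t v w₁ : List (Fin k)}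

lemma cancel (ih : LcmPropertyBelow k N) {u : List (Fin k)} (hu : u.length < N)
    (h : a :: u ≈ᵇ a :: v) : u ≈ᵇ v :=
  factorsThroughLcm_self_iff.1 (ih a a u v hu h)

lemma exists_of_distant (ih : LcmPropertyBelow k N) (hab : Distant a b) {u : List (Fin k)}
    (hu : u.length < N) (h : a :: u ≈ᵇ b :: v) : ∃ w, u ≈ᵇ b :: w ∧ v ≈ᵇ a :: w :=
  (factorsThroughLcm_iff_of_distant hab).1 (ih a b u v hu h)

lemma exists_of_adjacent (ih : LcmPropertyBelow k N) (hab : Adjacent a b) {u : List (Fin k)}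
    (hu : u.length < N) (h : a :: u ≈ᵇ b :: v) :
    ∃ w, u ≈ᵇ b :: a :: w ∧ v ≈ᵇ a :: b :: w :=
  (factorsThroughLcm_iff_of_adjacent hab).1 (ih a b u v hu h)

/- Induction step of the key lemma when the chain of moves from `a :: e :: _` to `b :: v` starts
at the head, turning `a e` into `e a` (`swap_head`) or `a e a` into `e a e` (`braid_head`);
`h₁`, `h₂` (or `h`) come from the induction hypothesis for the rest of the chain. Suffixes
`_of_R_of_R'` record how `e` and `a` are related to `b`. -/

lemma swap_head_of_adjacent_of_distant (ih : LcmPropertyBelow k (t.length + 1))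
    (hae : Distant a e) (heb : Adjacent e b) (hab : Distant a b)
    (h₁ : a :: t ≈ᵇ b :: e :: w₁) (h₂ : v ≈ᵇ e :: b :: w₁) :
    FactorsThroughLcm a (e :: t) b v := by
  obtain ⟨w₂, g₁, g₂⟩ := ih.exists_of_distant hab (by simp) h₁
  have hlen : w₁.length < t.length + 1 := by have := h₁.length_eq; simp at this; omega
  obtain ⟨w₃, g₃, g₄⟩ := ih.exists_of_distant hae.symm hlen g₂
  refine (factorsThroughLcm_iff_of_distant hab).2 ⟨e :: b :: w₃, ?_, ?_⟩
  · calc e :: t ≈ᵇ e :: b :: w₂ := g₁.cons e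
      _ ≈ᵇ e :: b :: e :: w₃ := (g₄.cons b).cons e
      _ ≈ᵇ b :: e :: b :: w₃ := .of_step (.braid [] _ heb)
  · calc v ≈ᵇ e :: b :: w₁ := h₂
      _ ≈ᵇ e :: b :: a :: w₃ := (g₃.cons b).cons e
      _ ≈ᵇ e :: a :: b :: w₃ := .of_step (.swap [e] _ hab.symm)
      _ ≈ᵇ a :: e :: b :: w₃ := .of_step (.swap [] _ hae.symm)

lemma swap_head_of_adjacent_of_adjacent (ih : LcmPropertyBelow k (t.length + 1))
    (hae : Distant a e) (heb : Adjacent e b) (hab : Adjacent a b)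
    (h₁ : a :: t ≈ᵇ b :: e :: w₁) (h₂ : v ≈ᵇ e :: b :: w₁) :
    FactorsThroughLcm a (e :: t) b v := by
  obtain ⟨w₂, g₁, g₂⟩ := ih.exists_of_adjacent hab (by simp) h₁
  have hlen₁ : w₁.length < t.length + 1 := by have := h₁.length_eq; simp at this; omega
  obtain ⟨w₃, g₃, g₄⟩ := ih.exists_of_distant hae.symm hlen₁ g₂
  have hlen₂ : w₂.length < t.length + 1 := by have := g₁.length_eq; simp at this; omega
  obtain ⟨w₄, g₅, g₆⟩ := ih.exists_of_adjacent heb.symm hlen₂ g₄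
  refine (factorsThroughLcm_iff_of_adjacent hab).2 ⟨e :: b :: a :: w₄, ?_, ?_⟩
  · calc e :: t ≈ᵇ e :: b :: a :: w₂ := g₁.cons e
      _ ≈ᵇ e :: b :: a :: e :: b :: w₄ := ((g₅.cons a).cons b).cons e
      _ ≈ᵇ e :: b :: e :: a :: b :: w₄ := .of_step (.swap [e, b] _ hae)
      _ ≈ᵇ b :: e :: b :: a :: b :: w₄ := .of_step (.braid [] _ heb)
      _ ≈ᵇ b :: e :: a :: b :: a :: w₄ := .of_step (.braid [b, e] _ hab.symm)
      _ ≈ᵇ b :: a :: e :: b :: a :: w₄ := .of_step (.swap [b] _ hae.symm)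
  · calc v ≈ᵇ e :: b :: w₁ := h₂
      _ ≈ᵇ e :: b :: a :: w₃ := (g₃.cons b).cons e
      _ ≈ᵇ e :: b :: a :: b :: e :: w₄ := ((g₆.cons a).cons b).cons e
      _ ≈ᵇ e :: a :: b :: a :: e :: w₄ := .of_step (.braid [e] _ hab.symm)
      _ ≈ᵇ a :: e :: b :: a :: e :: w₄ := .of_step (.swap [] _ hae.symm)
      _ ≈ᵇ a :: e :: b :: e :: a :: w₄ := .of_step (.swap [a, e, b] _ hae)
      _ ≈ᵇ a :: b :: e :: b :: a :: w₄ := .of_step (.braid [a] _ heb)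

lemma swap_head (ih : LcmPropertyBelow k (t.length + 1)) (hae : Distant a e)
    (h : FactorsThroughLcm e (a :: t) b v) : FactorsThroughLcm a (e :: t) b v := by
  obtain rfl | hbe := eq_or_ne b e
  · rw [factorsThroughLcm_iff_of_distant hae]
    exact ⟨t, .refl _, (factorsThroughLcm_self_iff.1 h).symm⟩
  obtain rfl | hba := eq_or_ne b a
  · obtain ⟨w₁, h₁, h₂⟩ := (factorsThroughLcm_iff_of_distant hae.symm).1 h
    exact factorsThroughLcm_self_iff.2 (((ih.cancel (by simp) h₁).cons e).trans h₂.symm)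
  rcases distant_or_adjacent_of_ne hbe.symm with heb | heb
  · obtain ⟨w₁, h₁, h₂⟩ := (factorsThroughLcm_iff_of_distant heb).1 h
    rcases distant_or_adjacent_of_ne hba.symm with hab | hab
    · obtain ⟨w₂, g₁, g₂⟩ := ih.exists_of_distant hab (by simp) h₁
      refine (factorsThroughLcm_iff_of_distant hab).2 ⟨e :: w₂, ?_, ?_⟩
      · exact (g₁.cons e).trans (.of_step (.swap [] _ heb))
      · exact (h₂.trans (g₂.cons e)).trans (.of_step (.swap [] _ hae.symm))
    · obtain ⟨w₂, g₁, g₂⟩ := ih.exists_of_adjacent hab (by simp) h₁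
      refine (factorsThroughLcm_iff_of_adjacent hab).2 ⟨e :: w₂, ?_, ?_⟩
      · calc e :: t ≈ᵇ e :: b :: a :: w₂ := g₁.cons e
          _ ≈ᵇ b :: e :: a :: w₂ := .of_step (.swap [] _ heb)
          _ ≈ᵇ b :: a :: e :: w₂ := .of_step (.swap [b] _ hae.symm)
      · calc v ≈ᵇ e :: a :: b :: w₂ := h₂.trans (g₂.cons e)
          _ ≈ᵇ a :: e :: b :: w₂ := .of_step (.swap [] _ hae.symm)
          _ ≈ᵇ a :: b :: e :: w₂ := .of_step (.swap [a] _ heb)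
  · obtain ⟨w₁, h₁, h₂⟩ := (factorsThroughLcm_iff_of_adjacent heb).1 h
    rcases distant_or_adjacent_of_ne hba.symm with hab | hab
    · exact ih.swap_head_of_adjacent_of_distant hae heb hab h₁ h₂
    · exact ih.swap_head_of_adjacent_of_adjacent hae heb hab h₁ h₂

lemma braid_head_of_distant_of_adjacent (ih : LcmPropertyBelow k (t.length + 2))
    (hae : Adjacent a e) (heb : Distant e b) (hab : Adjacent a b)
    (h₁ : a :: e :: t ≈ᵇ b :: w₁) (h₂ : v ≈ᵇ e :: w₁) :
    FactorsThroughLcm a (e :: a :: t) b v := by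
  obtain ⟨w₂, g₁, g₂⟩ := ih.exists_of_adjacent hab (by simp) h₁
  obtain ⟨w₃, g₃, g₄⟩ := ih.exists_of_distant heb (by simp) g₁
  have hlen : w₂.length < t.length + 2 := by have := g₁.length_eq; simp at this; omega
  obtain ⟨w₄, g₅, g₆⟩ := ih.exists_of_adjacent hae hlen g₄
  refine (factorsThroughLcm_iff_of_adjacent hab).2 ⟨e :: a :: b :: w₄, ?_, ?_⟩
  · calc e :: a :: t ≈ᵇ e :: a :: b :: w₃ := (g₃.cons a).cons e
      _ ≈ᵇ e :: a :: b :: a :: e :: w₄ := ((g₆.cons b).cons a).cons e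
      _ ≈ᵇ e :: b :: a :: b :: e :: w₄ := .of_step (.braid [e] _ hab)
      _ ≈ᵇ b :: e :: a :: b :: e :: w₄ := .of_step (.swap [] _ heb)
      _ ≈ᵇ b :: e :: a :: e :: b :: w₄ := .of_step (.swap [b, e, a] _ heb.symm)
      _ ≈ᵇ b :: a :: e :: a :: b :: w₄ := .of_step (.braid [b] _ hae.symm)
  · calc v ≈ᵇ e :: a :: b :: w₂ := h₂.trans (g₂.cons e)
      _ ≈ᵇ e :: a :: b :: e :: a :: w₄ := ((g₅.cons b).cons a).cons e
      _ ≈ᵇ e :: a :: e :: b :: a :: w₄ := .of_step (.swap [e, a] _ heb.symm)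
      _ ≈ᵇ a :: e :: a :: b :: a :: w₄ := .of_step (.braid [] _ hae.symm)
      _ ≈ᵇ a :: e :: b :: a :: b :: w₄ := .of_step (.braid [a, e] _ hab)
      _ ≈ᵇ a :: b :: e :: a :: b :: w₄ := .of_step (.swap [a] _ heb)

lemma braid_head_of_adjacent_of_distant (ih : LcmPropertyBelow k (t.length + 2))
    (hae : Adjacent a e) (heb : Adjacent e b) (hab : Distant a b)
    (h₁ : a :: e :: t ≈ᵇ b :: e :: w₁) (h₂ : v ≈ᵇ e :: b :: w₁) :
    FactorsThroughLcm a (e :: a :: t) b v := by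
  obtain ⟨w₂, g₁, g₂⟩ := ih.exists_of_distant hab (by simp) h₁
  have hlen₁ : w₁.length < t.length + 2 := by have := h₁.length_eq; simp at this; omega
  obtain ⟨w₃, g₃, g₄⟩ := ih.exists_of_adjacent hae.symm hlen₁ g₂
  obtain ⟨w₄, g₅, g₆⟩ := ih.exists_of_adjacent heb (by simp) (g₁.trans (g₄.cons b))
  have hlen₂ : (a :: w₃).length < t.length + 2 := by
    have := g₅.length_eq; have := g₆.length_eq; simp at *; omega
  obtain ⟨w₅, g₇, g₈⟩ :=
    ih.exists_of_distant hab (by simp at hlen₂; omega) (ih.cancel hlen₂ g₆)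
  refine (factorsThroughLcm_iff_of_distant hab).2 ⟨e :: a :: b :: e :: w₅, ?_, ?_⟩
  · calc e :: a :: t ≈ᵇ e :: a :: b :: e :: w₄ := (g₅.cons a).cons e
      _ ≈ᵇ e :: a :: b :: e :: a :: w₅ := (((g₈.cons e).cons b).cons a).cons e
      _ ≈ᵇ e :: b :: a :: e :: a :: w₅ := .of_step (.swap [e] _ hab)
      _ ≈ᵇ e :: b :: e :: a :: e :: w₅ := .of_step (.braid [e, b] _ hae)
      _ ≈ᵇ b :: e :: b :: a :: e :: w₅ := .of_step (.braid [] _ heb)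
      _ ≈ᵇ b :: e :: a :: b :: e :: w₅ := .of_step (.swap [b, e] _ hab.symm)
  · calc v ≈ᵇ e :: b :: a :: e :: w₃ := h₂.trans ((g₃.cons b).cons e)
      _ ≈ᵇ e :: b :: a :: e :: b :: w₅ := (((g₇.cons e).cons a).cons b).cons e
      _ ≈ᵇ e :: a :: b :: e :: b :: w₅ := .of_step (.swap [e] _ hab.symm)
      _ ≈ᵇ e :: a :: e :: b :: e :: w₅ := .of_step (.braid [e, a] _ heb.symm)
      _ ≈ᵇ a :: e :: a :: b :: e :: w₅ := .of_step (.braid [] _ hae.symm)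

lemma braid_head (ih : LcmPropertyBelow k (t.length + 2)) (hae : Adjacent a e)
    (h : FactorsThroughLcm e (a :: e :: t) b v) : FactorsThroughLcm a (e :: a :: t) b v := by
  obtain rfl | hbe := eq_or_ne b e
  · rw [factorsThroughLcm_iff_of_adjacent hae]
    exact ⟨t, .refl _, (factorsThroughLcm_self_iff.1 h).symm⟩
  obtain rfl | hba := eq_or_ne b a
  · obtain ⟨w₁, h₁, h₂⟩ := (factorsThroughLcm_iff_of_adjacent hae.symm).1 h
    have ht : t ≈ᵇ w₁ := ih.cancel (by simp) (ih.cancel (by simp) h₁)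
    exact factorsThroughLcm_self_iff.2 (((ht.cons _).cons e).trans h₂.symm)
  rcases distant_or_adjacent_of_ne hbe.symm with heb | heb
  · obtain ⟨w₁, h₁, h₂⟩ := (factorsThroughLcm_iff_of_distant heb).1 h
    rcases distant_or_adjacent_of_ne hba.symm with hab | hab
    · obtain ⟨w₂, g₁, g₂⟩ := ih.exists_of_distant hab (by simp) h₁
      obtain ⟨w₃, g₃, g₄⟩ := ih.exists_of_distant heb (by simp) g₁
      refine (factorsThroughLcm_iff_of_distant hab).2 ⟨e :: a :: w₃, ?_, ?_⟩
      · calc e :: a :: t ≈ᵇ e :: a :: b :: w₃ := (g₃.cons a).cons e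
          _ ≈ᵇ e :: b :: a :: w₃ := .of_step (.swap [e] _ hab)
          _ ≈ᵇ b :: e :: a :: w₃ := .of_step (.swap [] _ heb)
      · calc v ≈ᵇ e :: a :: e :: w₃ := h₂.trans ((g₂.trans (g₄.cons a)).cons e)
          _ ≈ᵇ a :: e :: a :: w₃ := .of_step (.braid [] _ hae.symm)
    · exact ih.braid_head_of_distant_of_adjacent hae heb hab h₁ h₂
  · obtain ⟨w₁, h₁, h₂⟩ := (factorsThroughLcm_iff_of_adjacent heb).1 h
    rcases distant_or_adjacent_of_ne hba.symm with hab | hab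
    · exact ih.braid_head_of_adjacent_of_distant hae heb hab h₁ h₂
    · exfalso
      unfold Adjacent at hae heb hab
      omega

theorem factorsThroughLcm_of_length_eq (ih : LcmPropertyBelow k N) {x : List (Fin k)}
    (h : x ≈ᵇ b :: v) :
    ∀ a u, x = a :: u → u.length = N → FactorsThroughLcm a u b v := by
  induction h using Relation.ReflTransGen.head_induction_on with
  | refl =>
    rintro a u ⟨⟩ -
    exact factorsThroughLcm_self_iff.2 (.refl _)
  | head hs _ ihc =>
    rintro a u rfl rfl
    rcases hs.cons_cases with ⟨u', rfl, hs'⟩ | ⟨e, t, hae, rfl, rfl⟩ |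
      ⟨e, t, hae, rfl, rfl⟩
    · exact (ihc a u' rfl hs'.length_eq.symm).of_equiv_left (.of_step hs')
    · exact ih.swap_head hae (ihc e _ rfl (by simp))
    · exact ih.braid_head hae (ihc e _ rfl (by simp))

end LcmPropertyBelow

theorem lcmPropertyBelow : ∀ N, LcmPropertyBelow k N
  | 0 => fun _ _ _ _ hu => absurd hu (Nat.not_lt_zero _)
  | N + 1 => fun a b u v hu h => by
    rcases Nat.lt_or_ge u.length N with hu' | hu'
    · exact lcmPropertyBelow N a b u v hu' h
    · exact (lcmPropertyBelow N).factorsThroughLcm_of_length_eq h a u rfl (by omega)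

theorem WordEquiv.factorsThroughLcm {a b : Fin k} {u v : List (Fin k)} (h : a :: u ≈ᵇ b :: v) :
    FactorsThroughLcm a u b v :=
  lcmPropertyBelow _ a b u v (Nat.lt_succ_self _) h

theorem WordEquiv.cancel_left {u v : List (Fin k)} :
    ∀ x : List (Fin k), x ++ u ≈ᵇ x ++ v → u ≈ᵇ v
  | [], h => h
  | _ :: x, h => cancel_left x (factorsThroughLcm_self_iff.1 h.factorsThroughLcm)

theorem WordEquiv.cancel_right {u v : List (Fin k)} (x : List (Fin k)) (h : u ++ x ≈ᵇ v ++ x) :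
    u ≈ᵇ v := by
  have := (cancel_left x.reverse (by simpa using h.reverse)).reverse
  rwa [List.reverse_reverse, List.reverse_reverse] at this

variable (k) in
def wordCon : Con (FreeMonoid (Fin k)) where
  r u v := u.toList ≈ᵇ v.toList
  iseqv := ⟨fun _ => .refl _, .symm, .trans⟩
  mul' h₁ h₂ := by simpa only [FreeMonoid.toList_mul] using h₁.append h₂

end BraidMonoid

abbrev BraidMonoid (k : ℕ) : Type := (BraidMonoid.wordCon k).Quotient

namespace BraidMonoid

variable {k : ℕ}

def mk (w : List (Fin k)) : BraidMonoid k := (FreeMonoid.ofList w : FreeMonoid (Fin k))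

def gen (a : Fin k) : BraidMonoid k := mk [a]

lemma mk_eq_mk_iff {u v : List (Fin k)} : mk u = mk v ↔ u ≈ᵇ v := (wordCon k).eq

@[simp] lemma mk_nil : mk ([] : List (Fin k)) = 1 := rfl

@[simp] lemma mk_append (u v : List (Fin k)) : mk (u ++ v) = mk u * mk v := by
  simp [mk, FreeMonoid.ofList_append]

lemma mk_cons (a : Fin k) (u : List (Fin k)) : mk (a :: u) = gen a * mk u := mk_append [a] u

lemma mk_surjective : Function.Surjective (mk (k := k)) := fun x =>
  Con.induction_on x fun w => ⟨w.toList, by simp [mk]⟩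

@[elab_as_elim]
lemma induction_on {P : BraidMonoid k → Prop} (x : BraidMonoid k) (one : P 1)
    (gen_mul : ∀ a x, P x → P (gen a * x)) : P x := by
  obtain ⟨w, rfl⟩ := mk_surjective x
  induction w with
  | nil => exact one
  | cons a w ih => rw [mk_cons]; exact gen_mul a _ ih

def length (x : BraidMonoid k) : ℕ :=
  Con.liftOn x (fun w => w.toList.length) fun _ _ h => h.length_eq

@[simp] lemma length_mk (w : List (Fin k)) : length (mk w) = w.length := rfl

@[simp] lemma length_mul (x y : BraidMonoid k) : length (x * y) = length x + length y := by
  obtain ⟨u, rfl⟩ := mk_surjective x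
  obtain ⟨v, rfl⟩ := mk_surjective y
  rw [← mk_append, length_mk, length_mk, length_mk, List.length_append]

@[simp] lemma length_one : length (1 : BraidMonoid k) = 0 := rfl

@[simp] lemma length_gen (a : Fin k) : length (gen a) = 1 := rfl

lemma eq_one_of_length_eq_zero {x : BraidMonoid k} (h : length x = 0) : x = 1 := by
  obtain ⟨w, rfl⟩ := mk_surjective x
  simp_all

lemma eq_one_of_mul_eq_one {x y : BraidMonoid k} (h : x * y = 1) : x = 1 :=
  eq_one_of_length_eq_zero <| by
    have := congrArg length h
    simp only [length_mul, length_one] at this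
    omega

instance : IsCancelMul (BraidMonoid k) where
  mul_left_cancel x y z h := by
    obtain ⟨u, rfl⟩ := mk_surjective x
    obtain ⟨v, rfl⟩ := mk_surjective y
    obtain ⟨w, rfl⟩ := mk_surjective z
    simp only [← mk_append, mk_eq_mk_iff] at h ⊢
    exact h.cancel_left u
  mul_right_cancel x y z h := by
    obtain ⟨u, rfl⟩ := mk_surjective x
    obtain ⟨v, rfl⟩ := mk_surjective y
    obtain ⟨w, rfl⟩ := mk_surjective z
    simp only [← mk_append, mk_eq_mk_iff] at h ⊢
    exact h.cancel_right u

lemma gen_mul_complement (a b : Fin k) :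
    gen a * mk (complement a b) = gen b * mk (complement b a) := by
  rw [← mk_cons, ← mk_cons, mk_eq_mk_iff]
  exact cons_complement_equiv a b

theorem exists_of_gen_mul_eq_gen_mul {a b : Fin k} {x y : BraidMonoid k}
    (h : gen a * x = gen b * y) :
    ∃ z, x = mk (complement a b) * z ∧ y = mk (complement b a) * z := by
  obtain ⟨u, rfl⟩ := mk_surjective x
  obtain ⟨v, rfl⟩ := mk_surjective y
  rw [← mk_cons, ← mk_cons, mk_eq_mk_iff] at h
  obtain ⟨w, hu, hv⟩ := h.factorsThroughLcm
  exact ⟨mk w, by rwa [← mk_append, mk_eq_mk_iff], by rwa [← mk_append, mk_eq_mk_iff]⟩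

lemma gen_mul_gen_comm {a b : Fin k} (h : Distant a b) : gen a * gen b = gen b * gen a := by
  rw [gen, gen, ← mk_append, ← mk_append, mk_eq_mk_iff]
  exact .of_step (.swap [] [] h)

lemma gen_mul_gen_mul_gen {a b : Fin k} (h : Adjacent a b) :
    gen a * gen b * gen a = gen b * gen a * gen b := by
  simp only [gen, ← mk_append, mk_eq_mk_iff]
  exact .of_step (.braid [] [] h)

/-- Out-of-range indices `i ≥ k` give `σ i = 1`. -/
def σ (i : ℕ) : BraidMonoid k := if h : i < k then gen ⟨i, h⟩ else 1

lemma σ_val (a : Fin k) : σ a.val = gen a := dif_pos a.isLt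

lemma commute_σ_σ {i j : ℕ} (h : i + 2 ≤ j) : Commute (σ (k := k) i) (σ j) := by
  unfold σ
  split_ifs with hi hj
  · exact gen_mul_gen_comm (Or.inl (by simp only; omega))
  all_goals simp

lemma σ_mul_σ_mul_σ {i : ℕ} (h : i + 1 < k) :
    σ i * σ (i + 1) * σ i = σ (k := k) (i + 1) * σ i * σ (i + 1) := by
  rw [σ, σ, dif_pos (by omega), dif_pos h]
  exact gen_mul_gen_mul_gen (Or.inl rfl)

def descend : ℕ → BraidMonoid k
  | 0 => 1
  | m + 1 => σ m * descend m

def ascend : ℕ → BraidMonoid k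
  | 0 => 1
  | m + 1 => ascend m * σ m

/-- Garside's fundamental braid on `σ₀, …, σₘ₋₁`: `Δₘ₊₁ = Δₘ σₘ σₘ₋₁ ⋯ σ₀`. -/
def delta : ℕ → BraidMonoid k
  | 0 => 1
  | m + 1 => delta m * descend (m + 1)

lemma commute_σ_descend {j : ℕ} :
    ∀ {m : ℕ}, m + 1 ≤ j → Commute (σ (k := k) j) (descend m)
  | 0, _ => Commute.one_right _
  | _ + 1, h => (commute_σ_σ (by omega)).symm.mul_right (commute_σ_descend (by omega))

lemma commute_σ_ascend {j : ℕ} :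
    ∀ {m : ℕ}, m + 1 ≤ j → Commute (σ (k := k) j) (ascend m)
  | 0, _ => Commute.one_right _
  | _ + 1, h => (commute_σ_ascend (by omega)).mul_right (commute_σ_σ (by omega)).symm

lemma commute_σ_delta {j : ℕ} : ∀ {m : ℕ}, m + 1 ≤ j → Commute (σ (k := k) j) (delta m)
  | 0, _ => Commute.one_right _
  | _ + 1, h => (commute_σ_delta (by omega)).mul_right (commute_σ_descend h)

lemma σ_mul_descend {i m : ℕ} (him : i + 2 ≤ m) (hm : m ≤ k) :
    σ (k := k) i * descend m = descend m * σ (i + 1) := by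
  induction m, him using Nat.le_induction with
  | base =>
    show σ i * (σ (i + 1) * (σ i * descend i)) = σ (i + 1) * (σ i * descend i) * σ (i + 1)
    calc σ i * (σ (i + 1) * (σ i * descend i))
        = σ i * σ (i + 1) * σ i * descend i := by simp only [mul_assoc]
      _ = σ (i + 1) * σ i * (σ (i + 1) * descend i) := by
        rw [σ_mul_σ_mul_σ (by omega)]; simp only [mul_assoc]
      _ = σ (i + 1) * (σ i * descend i) * σ (i + 1) := by
        rw [(commute_σ_descend le_rfl).eq]; simp only [mul_assoc]
  | succ m hm' ih =>
    show σ i * (σ m * descend m) = σ m * descend m * σ (i + 1)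
    rw [← mul_assoc, (commute_σ_σ hm').eq, mul_assoc, ih (by omega), mul_assoc]

lemma σ_succ_mul_ascend {i m : ℕ} (him : i + 2 ≤ m) (hm : m ≤ k) :
    σ (k := k) (i + 1) * ascend m = ascend m * σ i := by
  induction m, him using Nat.le_induction with
  | base =>
    show σ (i + 1) * (ascend i * σ i * σ (i + 1)) = ascend i * σ i * σ (i + 1) * σ i
    calc σ (i + 1) * (ascend i * σ i * σ (i + 1))
        = ascend i * (σ (i + 1) * σ i * σ (i + 1)) := by
          rw [← mul_assoc, ← mul_assoc, (commute_σ_ascend le_rfl).eq]; simp only [mul_assoc]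
      _ = ascend i * σ i * σ (i + 1) * σ i := by
        rw [← σ_mul_σ_mul_σ (by omega)]; simp only [mul_assoc]
  | succ m hm' ih =>
    show σ (i + 1) * (ascend m * σ m) = ascend m * σ m * σ i
    rw [← mul_assoc, ih (by omega), mul_assoc, (commute_σ_σ hm').eq, mul_assoc]

lemma delta_succ_eq_ascend_mul : ∀ m : ℕ, delta (k := k) (m + 1) = ascend (m + 1) * delta m
  | 0 => by simp [delta, ascend, descend]
  | m + 1 => by
    show delta (m + 1) * (σ (m + 1) * descend (m + 1)) =
      ascend (m + 1) * σ (m + 1) * (delta m * descend (m + 1))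
    rw [delta_succ_eq_ascend_mul m, mul_assoc, ← mul_assoc (delta m),
      ← (commute_σ_delta le_rfl).eq]
    simp only [mul_assoc]

lemma σ_dvd_delta {m : ℕ} (hm : m ≤ k) {i : ℕ} (him : i < m) :
    σ i ∣ delta (k := k) m := by
  induction m generalizing i with
  | zero => exact absurd him (Nat.not_lt_zero _)
  | succ m ih =>
    rcases Nat.lt_succ_iff_lt_or_eq.1 him with him | rfl
    · exact (ih (by omega) him).trans (dvd_mul_right _ _)
    rcases i with _ | i
    · exact ⟨descend 0, by simp [delta, descend]⟩
    obtain ⟨d, hd⟩ := ih (by omega) (Nat.lt_succ_self i)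
    exact ⟨ascend (i + 2) * d, by
      rw [delta_succ_eq_ascend_mul, hd, ← mul_assoc, ← σ_succ_mul_ascend le_rfl hm,
        mul_assoc]⟩

lemma σ_mul_delta : ∀ {i m : ℕ}, i < m → m ≤ k →
    σ i * delta (k := k) m = delta m * σ (m - 1 - i)
  | _, 0, him, _ => absurd him (Nat.not_lt_zero _)
  | 0, 1, _, _ => by simp [delta, descend]
  | 0, m + 2, _, hm => by
    show σ 0 * (delta (m + 1) * descend (m + 2)) = delta (m + 1) * descend (m + 2) * σ (m + 1)
    rw [← mul_assoc, σ_mul_delta (Nat.succ_pos m) (by omega), mul_assoc, mul_assoc,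
      σ_mul_descend (by omega) hm]
    simp
  | i + 1, m + 1, him, hm => by
    rw [delta_succ_eq_ascend_mul, ← mul_assoc, σ_succ_mul_ascend (by omega) hm, mul_assoc,
      σ_mul_delta (by omega) (by omega), ← mul_assoc, ← delta_succ_eq_ascend_mul]
    congr 2
    omega

lemma gen_mul_delta (a : Fin k) : gen a * delta k = delta k * gen a.rev := by
  rw [← σ_val, ← σ_val, σ_mul_delta a.isLt le_rfl, Fin.val_rev]
  congr 2
  omega

lemma gen_dvd_delta (a : Fin k) : gen a ∣ delta k :=
  σ_val a ▸ σ_dvd_delta le_rfl a.isLt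

lemma exists_mul_delta_eq (x : BraidMonoid k) : ∃ y, x * delta k = delta k * y := by
  induction x using induction_on with
  | one => exact ⟨1, by simp⟩
  | gen_mul a x ih =>
    obtain ⟨y, hy⟩ := ih
    exact ⟨gen a.rev * y, by rw [mul_assoc, hy, ← mul_assoc, gen_mul_delta, mul_assoc]⟩

lemma exists_mul_delta_pow_eq (x : BraidMonoid k) (n : ℕ) :
    ∃ y, x * delta k ^ n = delta k ^ n * y := by
  induction n generalizing x with
  | zero => exact ⟨x, by simp⟩
  | succ n ih =>
    obtain ⟨y, hy⟩ := exists_mul_delta_eq x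
    obtain ⟨z, hz⟩ := ih y
    exact ⟨z, by rw [pow_succ', ← mul_assoc, hy, mul_assoc, hz, mul_assoc]⟩

lemma dvd_delta_pow_length (x : BraidMonoid k) : x ∣ delta k ^ length x := by
  induction x using induction_on with
  | one => exact one_dvd _
  | gen_mul a x ih =>
    obtain ⟨c, hc⟩ := ih
    obtain ⟨d, hd⟩ := gen_dvd_delta a
    obtain ⟨e, he⟩ := exists_mul_delta_pow_eq d (length x)
    refine ⟨c * e, ?_⟩
    calc delta k ^ length (gen a * x) = gen a * d * delta k ^ length x := by
          rw [← hd, length_mul, length_gen, add_comm, pow_succ']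
      _ = gen a * x * (c * e) := by rw [mul_assoc, he, hc]; simp only [mul_assoc]

theorem exists_dvd_and_dvd (x y : BraidMonoid k) : ∃ z, x ∣ z ∧ y ∣ z :=
  ⟨delta k ^ (length x + length y),
    (dvd_delta_pow_length x).trans (pow_dvd_pow _ (Nat.le_add_right _ _)),
    (dvd_delta_pow_length y).trans (pow_dvd_pow _ (Nat.le_add_left _ _))⟩

theorem exists_mul_eq_mul (x y : BraidMonoid k) : ∃ s t, s * x = t * y := by
  obtain ⟨u, rfl⟩ := mk_surjective x
  obtain ⟨v, rfl⟩ := mk_surjective y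
  obtain ⟨z, ⟨c, hc⟩, ⟨d, hd⟩⟩ := exists_dvd_and_dvd (mk u.reverse) (mk v.reverse)
  obtain ⟨s, rfl⟩ := mk_surjective c
  obtain ⟨t, rfl⟩ := mk_surjective d
  have h : u.reverse ++ s ≈ᵇ v.reverse ++ t := by
    rw [← mk_eq_mk_iff, mk_append, mk_append, ← hc, ← hd]
  refine ⟨mk s.reverse, mk t.reverse, ?_⟩
  rw [← mk_append, ← mk_append, mk_eq_mk_iff]
  simpa using h.reverse

lemma isLcm_gen_gen (a b : Fin k) : IsLcm (gen a) (gen b) (gen a * mk (complement a b)) := by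
  refine ⟨dvd_mul_right _ _, gen_mul_complement a b ▸ dvd_mul_right _ _, ?_⟩
  rintro z ⟨u, rfl⟩ ⟨v, huv⟩
  obtain ⟨w, rfl, -⟩ := exists_of_gen_mul_eq_gen_mul huv
  exact ⟨w, (mul_assoc _ _ _).symm⟩

lemma eq_one_or_exists_eq_gen_mul (x : BraidMonoid k) : x = 1 ∨ ∃ a y, x = gen a * y := by
  induction x using induction_on with
  | one => exact .inl rfl
  | gen_mul a y _ => exact .inr ⟨a, y, rfl⟩

/-- With `α = mk (complement a b)` and `β = mk (complement b a)`, the lcm of `gen a * x₁` and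
`gen b * y₁` is `gen a * α * lcm p q`, where `lcm x₁ α = α * p` and `lcm y₁ β = β * q`; these
three lcms are taken below proper divisors of `z`. -/
theorem exists_isLcm_of_dvd (z : BraidMonoid k) :
    ∀ x y, x ∣ z → y ∣ z → ∃ m, IsLcm x y m := by
  induction hz : length z using Nat.strong_induction_on generalizing z with
  | _ N ih =>
    intro x y hx hy
    rcases eq_one_or_exists_eq_gen_mul x with rfl | ⟨a, x₁, rfl⟩
    · exact ⟨y, isLcm_one_left y⟩
    rcases eq_one_or_exists_eq_gen_mul y with rfl | ⟨b, y₁, rfl⟩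
    · exact ⟨_, (isLcm_one_left _).symm⟩
    obtain ⟨c, rfl⟩ := hx
    obtain ⟨d, hd⟩ := hy
    rw [mul_assoc, mul_assoc] at hd
    obtain ⟨w, hw₁, hw₂⟩ := exists_of_gen_mul_eq_gen_mul hd
    have hd' := congrArg length hd
    have hw' := congrArg length hw₁
    simp only [length_mul, length_gen] at hz hd' hw'
    obtain ⟨j₁, hj₁⟩ :=
      ih _ (by simp; omega) _ rfl x₁ (mk (complement a b)) (dvd_mul_right _ c) ⟨w, hw₁⟩
    obtain ⟨j₂, hj₂⟩ :=
      ih _ (by simp; omega) _ rfl y₁ (mk (complement b a)) (dvd_mul_right _ d) ⟨w, hw₂⟩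
    obtain ⟨p, rfl⟩ := hj₁.2.1
    obtain ⟨q, rfl⟩ := hj₂.2.1
    have hp : p ∣ w := by
      rw [← mul_dvd_mul_iff_left' (mk (complement a b)), ← hw₁]
      exact hj₁.2.2 _ (dvd_mul_right _ _) ⟨w, hw₁⟩
    have hq : q ∣ w := by
      rw [← mul_dvd_mul_iff_left' (mk (complement b a)), ← hw₂]
      exact hj₂.2.2 _ (dvd_mul_right _ _) ⟨w, hw₂⟩
    obtain ⟨j, hj⟩ := ih _ (by omega) _ rfl p q hp hq
    exact ⟨_, isLcm_mul_mul (isLcm_gen_gen a b) rfl (gen_mul_complement a b).symm hj₁ hj₂ hj⟩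

theorem exists_isLcm (x y : BraidMonoid k) : ∃ m, IsLcm x y m :=
  let ⟨_, hx, hy⟩ := exists_dvd_and_dvd x y
  exists_isLcm_of_dvd _ x y hx hy

lemma WordEquiv.map_prod_eq {N : Type*} [Monoid N] (f : Fin k → N)
    (hd : ∀ a b, Distant a b → f a * f b = f b * f a)
    (ha : ∀ a b, Adjacent a b → f a * f b * f a = f b * f a * f b)
    {u v : List (Fin k)} (h : u ≈ᵇ v) : (u.map f).prod = (v.map f).prod := by
  induction h with
  | refl => rfl
  | tail _ hs ih =>
    rw [ih]
    cases hs with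
    | swap x y h =>
      simp only [List.map_append, List.map_cons, List.prod_append, List.prod_cons]
      congr 1
      simp only [← mul_assoc, hd _ _ h]
    | braid x y h =>
      simp only [List.map_append, List.map_cons, List.prod_append, List.prod_cons]
      congr 1
      simp only [← mul_assoc, ha _ _ h]

section Lift

variable {N : Type*} [Monoid N]

def lift (f : Fin k → N) (hd : ∀ a b, Distant a b → f a * f b = f b * f a)
    (ha : ∀ a b, Adjacent a b → f a * f b * f a = f b * f a * f b) : BraidMonoid k →* N :=
  (wordCon k).lift (FreeMonoid.lift f) fun u v h => by
    simpa [Con.ker_rel, FreeMonoid.lift_apply] using h.map_prod_eq f hd ha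

@[simp] lemma lift_gen (f : Fin k → N) (hd ha) (a : Fin k) : lift f hd ha (gen a) = f a := by
  simp [lift, gen, mk]

lemma hom_ext {φ ψ : BraidMonoid k →* N} (h : ∀ a, φ (gen a) = ψ (gen a)) : φ = ψ :=
  MonoidHom.ext fun x => induction_on x (by simp) fun a x hx => by simp [h, hx]

end Lift

noncomputable instance : OreLocalization.OreSet (⊤ : Submonoid (BraidMonoid k)) where
  ore_right_cancel _ _ _ h := ⟨1, by simpa using mul_right_cancel h⟩
  oreNum r s := (exists_mul_eq_mul r s).choose_spec.choose
  oreDenom r s := ⟨(exists_mul_eq_mul r s).choose, trivial⟩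
  ore_eq r s := (exists_mul_eq_mul r s).choose_spec.choose_spec

lemma numeratorHom_injective :
    Function.Injective (OreLocalization.numeratorHom (S := (⊤ : Submonoid (BraidMonoid k)))) := by
  intro x y h
  obtain ⟨u, v, h₁, h₂⟩ := OreLocalization.oreDiv_eq_iff.1 h
  simp only [OneMemClass.coe_one, mul_one] at h₂
  rw [Submonoid.smul_def, smul_eq_mul, smul_eq_mul, h₂] at h₁
  exact (mul_left_cancel h₁).symm

end BraidMonoid

namespace BraidGroup

open BraidMonoid

variable {n : ℕ}

lemma braidGen_mul_comm {a b : Fin (n - 1)} (h : Distant a b) :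
    braidGen n a * braidGen n b = braidGen n b * braidGen n a := by
  have key {i j : Fin (n - 1)} (hij : i.val + 1 < j.val) :
      braidGen n i * braidGen n j = braidGen n j * braidGen n i := by
    have :=
      PresentedGroup.mk_eq_mk_of_mul_inv_mem (rels := braidRels n) (Or.inl ⟨i, j, hij, rfl⟩)
    rwa [map_mul, map_mul] at this
  rcases h with h | h
  exacts [key h, (key h).symm]

lemma braidGen_mul_braidGen_mul_braidGen {a b : Fin (n - 1)} (h : Adjacent a b) :
    braidGen n a * braidGen n b * braidGen n a = braidGen n b * braidGen n a * braidGen n b := by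
  have key {i j : Fin (n - 1)} (hij : j.val = i.val + 1) :
      braidGen n i * braidGen n j * braidGen n i = braidGen n j * braidGen n i * braidGen n j := by
    have :=
      PresentedGroup.mk_eq_mk_of_mul_inv_mem (rels := braidRels n) (Or.inr ⟨i, j, hij, rfl⟩)
    rwa [map_mul, map_mul, map_mul, map_mul] at this
  rcases h with h | h
  exacts [key h.symm, (key h.symm).symm]

def _root_.BraidMonoid.toBraidGroup (n : ℕ) : BraidMonoid (n - 1) →* BraidGroup n :=
  BraidMonoid.lift (braidGen n) (fun _ _ => braidGen_mul_comm)
    (fun _ _ => braidGen_mul_braidGen_mul_braidGen)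

@[simp] lemma toBraidGroup_gen (a : Fin (n - 1)) : toBraidGroup n (gen a) = braidGen n a :=
  lift_gen ..

def lift {H : Type*} [Group H] (φ : BraidMonoid (n - 1) →* H) : BraidGroup n →* H :=
  PresentedGroup.toGroup (f := fun a => φ (gen a)) <| by
    rintro r (⟨i, j, hij, rfl⟩ | ⟨i, j, hij, rfl⟩) <;>
      simp only [map_mul, map_inv, FreeGroup.lift_apply_of, mul_inv_eq_one]
    · rw [← map_mul, ← map_mul, gen_mul_gen_comm (Or.inl hij)]
    · simp only [← map_mul]
      rw [gen_mul_gen_mul_gen (Or.inl hij.symm)]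

lemma lift_toBraidGroup {H : Type*} [Group H] (φ : BraidMonoid (n - 1) →* H)
    (x : BraidMonoid (n - 1)) : lift φ (toBraidGroup n x) = φ x := by
  refine DFunLike.congr_fun (hom_ext (φ := (lift φ).comp (toBraidGroup n)) fun a => ?_) x
  simp [lift, braidGen, PresentedGroup.toGroup.of]

theorem toBraidGroup_injective : Function.Injective (toBraidGroup n) := by
  intro x y h
  let φ := IsUnit.liftRight (OreLocalization.numeratorHom (S := ⊤))
    fun x : BraidMonoid (n - 1) => OreLocalization.numerator_isUnit ⟨x, Submonoid.mem_top x⟩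
  apply numeratorHom_injective
  have := congrArg (fun g => (lift φ g).val) h
  simpa only [lift_toBraidGroup, φ, IsUnit.coe_liftRight] using this

lemma exists_eq_inv_mul (g : BraidGroup n) :
    ∃ a b, g = (toBraidGroup n a)⁻¹ * toBraidGroup n b := by
  let H : Subgroup (BraidGroup n) :=
    { carrier := {g | ∃ a b, g = (toBraidGroup n a)⁻¹ * toBraidGroup n b}
      one_mem' := ⟨1, 1, by simp⟩
      mul_mem' := by
        rintro _ _ ⟨a, b, rfl⟩ ⟨c, d, rfl⟩
        obtain ⟨s, t, hst⟩ := exists_mul_eq_mul b c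
        have : toBraidGroup n b * (toBraidGroup n c)⁻¹ =
            (toBraidGroup n s)⁻¹ * toBraidGroup n t := by
          rw [mul_inv_eq_iff_eq_mul, mul_assoc, eq_inv_mul_iff_mul_eq, ← map_mul, ← map_mul,
            hst]
        refine ⟨s * a, t * d, ?_⟩
        rw [map_mul, map_mul, mul_inv_rev, mul_assoc, ← mul_assoc (toBraidGroup n b), this]
        group
      inv_mem' := by
        rintro _ ⟨a, b, rfl⟩
        exact ⟨b, a, by group⟩ }
  exact PresentedGroup.generated_by (braidRels n) H
    (fun a => ⟨1, gen a, by simp [braidGen]⟩) g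

instance : PartialOrder (BraidGroup n) where
  le x y := x⁻¹ * y ∈ MonoidHom.mrange (toBraidGroup n)
  le_refl x := ⟨1, by simp⟩
  le_trans x y z := by
    rintro ⟨p, hp⟩ ⟨q, hq⟩
    exact ⟨p * q, by rw [map_mul, hp, hq]; group⟩
  le_antisymm x y := by
    rintro ⟨p, hp⟩ ⟨q, hq⟩
    have hpq : p * q = 1 := toBraidGroup_injective (by rw [map_mul, hp, hq, map_one]; group)
    rw [eq_one_of_mul_eq_one hpq, map_one] at hp
    exact inv_mul_eq_one.1 hp.symm

lemma le_def {x y : BraidGroup n} : x ≤ y ↔ x⁻¹ * y ∈ MonoidHom.mrange (toBraidGroup n) :=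
  Iff.rfl

instance : MulLeftMono (BraidGroup n) :=
  ⟨fun g x y h => by rwa [le_def, mul_inv_rev, mul_assoc, inv_mul_cancel_left]⟩

lemma toBraidGroup_le_toBraidGroup {p q : BraidMonoid (n - 1)} :
    toBraidGroup n p ≤ toBraidGroup n q ↔ p ∣ q := by
  simp only [le_def, MonoidHom.mem_mrange, eq_inv_mul_iff_mul_eq, ← map_mul,
    toBraidGroup_injective.eq_iff]
  exact ⟨fun ⟨c, hc⟩ => ⟨c, hc.symm⟩, fun ⟨c, hc⟩ => ⟨c, hc.symm⟩⟩

lemma exists_eq_toBraidGroup_of_le {p : BraidMonoid (n - 1)} {g : BraidGroup n}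
    (h : toBraidGroup n p ≤ g) : ∃ r, g = toBraidGroup n r := by
  obtain ⟨c, hc⟩ := h
  exact ⟨p * c, by rw [map_mul, hc, mul_inv_cancel_left]⟩

lemma isLUB_toBraidGroup {p q m : BraidMonoid (n - 1)} (h : IsLcm p q m) :
    IsLUB {toBraidGroup n p, toBraidGroup n q} (toBraidGroup n m) := by
  refine ⟨?_, fun g hg => ?_⟩
  · rintro _ (rfl | rfl)
    exacts [toBraidGroup_le_toBraidGroup.2 h.1, toBraidGroup_le_toBraidGroup.2 h.2.1]
  obtain ⟨r, rfl⟩ := exists_eq_toBraidGroup_of_le (hg (.inl rfl))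
  exact toBraidGroup_le_toBraidGroup.2 (h.2.2 r (toBraidGroup_le_toBraidGroup.1 (hg (.inl rfl)))
    (toBraidGroup_le_toBraidGroup.1 (hg (.inr rfl))))

theorem exists_isLUB_pair (x y : BraidGroup n) : ∃ s, IsLUB {x, y} s := by
  obtain ⟨a, b, rfl⟩ := exists_eq_inv_mul x
  obtain ⟨c, d, rfl⟩ := exists_eq_inv_mul y
  obtain ⟨s, t, hst⟩ := exists_mul_eq_mul a c
  obtain ⟨m, hm⟩ := exists_isLcm (s * b) (t * d)
  have := (OrderIso.mulLeft (toBraidGroup n (s * a))⁻¹).isLUB_image'.2 (isLUB_toBraidGroup hm)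
  refine ⟨(toBraidGroup n (s * a))⁻¹ * toBraidGroup n m, ?_⟩
  convert this using 1
  · rw [Set.image_pair, OrderIso.mulLeft_apply, OrderIso.mulLeft_apply]
    nth_rewrite 2 [hst]
    simp only [map_mul, mul_inv_rev, mul_assoc, inv_mul_cancel_left]
  · rfl

noncomputable instance : SemilatticeSup (BraidGroup n) :=
  SemilatticeSup.ofIsLUB (fun x y => (exists_isLUB_pair x y).choose)
    fun x y => (exists_isLUB_pair x y).choose_spec

end BraidGroup

/-- The braid group `Bₙ` is torsion free. -/
theorem braidGroup_torsionFree (n : ℕ) (β : BraidGroup n) (hβ : β ≠ 1)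
    (m : ℕ) (hm : 1 ≤ m) : β ^ m ≠ 1 :=
  fun h => hβ (isOfFinOrder_iff_pow_eq_one.2 ⟨m, hm, h⟩).eq_one_of_semilatticeSup
end

section
/- (Baumslag) If G is a finitely generated, residually finite group, then its automorphism group Aut(G) is residually finite. -/
/-!
An automorphism `f ≠ 1` moves some `g`, and some homomorphism `φ` to a finite group `H`
separates `f g` from `g`. As `G` is finitely generated there are only finitely many
homomorphisms `G →* H`, so the intersection `N` of their kernels is a characteristic subgroup
of finite index inside `ker φ`. Hence `Aut G → Aut (G ⧸ N)` maps to a finite group, and `f`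
survives because it moves the class of `g`.
-/

instance MonoidHom.finite_of_fg (G P : Type*) [Group G] [Group.FG G] [Group P] [Finite P] :
    Finite (G →* P) := by
  obtain ⟨S, hS, hSfin⟩ := Group.fg_iff.mp ‹Group.FG G›
  have := hSfin.to_subtype
  exact .of_injective (fun ψ (s : S) => ψ s) fun ψ₁ ψ₂ h =>
    MonoidHom.eq_of_eqOn_dense hS fun x hx => congrFun h ⟨x, hx⟩

section Characteristic

variable {G : Type*} [Group G] (N : Subgroup G) [N.Characteristic]

def MulAut.quotient : MulAut G →* MulAut (G ⧸ N) where
  toFun σ := QuotientGroup.congr N N σ (Subgroup.characteristic_iff_map_eq.mp ‹_› σ)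
  map_one' := by ext x; induction x using QuotientGroup.induction_on; rfl
  map_mul' σ τ := by ext x; induction x using QuotientGroup.induction_on; rfl

theorem MulAut.quotient_eq_one_iff (σ : MulAut G) :
    MulAut.quotient N σ = 1 ↔ ∀ g, (σ g)⁻¹ * g ∈ N := by
  simp only [MulEquiv.ext_iff, QuotientGroup.forall_mk, MulAut.one_apply]
  exact forall_congr' fun g => QuotientGroup.eq

end Characteristic

section CommonKer

variable (G P : Type*) [Group G] [Group P]

def commonKer : Subgroup G := ⨅ ψ : G →* P, ψ.ker

variable {G P}

theorem commonKer_le_ker (ψ : G →* P) : commonKer G P ≤ ψ.ker := iInf_le _ ψ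

instance commonKer_characteristic : (commonKer G P).Characteristic :=
  Subgroup.characteristic_iff_le_comap.mpr fun σ _ hx =>
    Subgroup.mem_iInf.mpr fun ψ => Subgroup.mem_iInf.mp hx (ψ.comp σ.toMonoidHom)

instance commonKer_finiteIndex [Group.FG G] [Finite P] : (commonKer G P).FiniteIndex :=
  Subgroup.finiteIndex_iInf fun _ => inferInstance

end CommonKer

/-- (Baumslag) The automorphism group of a finitely generated, residually finite group
is residually finite. -/
theorem aut_residuallyFinite (G : Type) [Group G] [Group.FG G]
    (hres : ∀ a : G, a ≠ 1 →
      ∃ (H : Type) (_ : Group H) (_ : Finite H) (φ : G →* H), φ a ≠ 1) :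
    ∀ f : MulAut G, f ≠ 1 →
      ∃ (K : Type) (_ : Group K) (_ : Finite K) (ψ : MulAut G →* K), ψ f ≠ 1 := by
  intro f hf
  obtain ⟨g, hg⟩ : ∃ g, f g ≠ g := DFunLike.ne_iff.mp hf
  obtain ⟨H, _, _, φ, hφ⟩ := hres ((f g)⁻¹ * g) (mt inv_mul_eq_one.mp hg)
  refine ⟨MulAut (G ⧸ commonKer G H), inferInstance, inferInstance, MulAut.quotient _,
    fun hf₁ => hφ ?_⟩
  exact commonKer_le_ker φ ((MulAut.quotient_eq_one_iff _ f).mp hf₁ g)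
end

section
/- (Mal'cev) Every finitely generated, residually finite group is Hopfian: if G is finitely generated and residually finite, then every surjective group homomorphism G → G is injective. -/
/-!
Proof idea: a homomorphism from a finitely generated group to a finite group is determined by
the images of finitely many generators, so there are only finitely many of them. Precomposition
with a surjective endomorphism `f` is injective on this finite set, hence bijective, so every
homomorphism `φ` to a finite group factors as `ψ ∘ f`. An element of `ker f` is then killed by
every such `φ`, and residual finiteness forces it to be trivial.
-/

namespace MonoidHom

theorem finite_of_fg_s6 (G M : Type*) [Group G] [Group.FG G] [Monoid M] [Finite M] :
    Finite (G →* M) := by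
  obtain ⟨S, hS⟩ := Group.FG.out (G := G)
  refine Finite.of_injective (fun φ : G →* M => fun s : S => φ s) fun φ ψ h => ?_
  exact eq_of_eqOn_dense hS fun x hx => congrFun h ⟨x, hx⟩

theorem exists_comp_eq_of_surjective {G M : Type*} [Group G] [Group.FG G] [Monoid M] [Finite M]
    {f : G →* G} (hf : Function.Surjective f) (φ : G →* M) : ∃ ψ : G →* M, ψ.comp f = φ := by
  have := finite_of_fg_s6 G M
  have hcomp : Function.Injective fun ψ : G →* M => ψ.comp f :=
    fun _ _ h => (cancel_right hf).mp h
  exact Finite.injective_iff_surjective.mp hcomp φ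

end MonoidHom

/-- (Mal'cev) Every finitely generated, residually finite group is Hopfian. -/
theorem fg_residuallyFinite_hopfian (G : Type) [Group G] [Group.FG G]
    (hres : ∀ a : G, a ≠ 1 →
      ∃ (H : Type) (_ : Group H) (_ : Finite H) (φ : G →* H), φ a ≠ 1)
    (f : G →* G) (hf : Function.Surjective f) : Function.Injective f := by
  refine (injective_iff_map_eq_one f).mpr fun a hfa => ?_
  by_contra ha
  obtain ⟨H, _, _, φ, hφa⟩ := hres a ha
  obtain ⟨ψ, rfl⟩ := MonoidHom.exists_comp_eq_of_surjective hf φ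
  exact hφa (by rw [MonoidHom.comp_apply, hfa, map_one])
end

section
/- (Garside normal form) Every braid β ∈ B_n can be written in a unique way as β = Δ^p A, where p ∈ ℤ, A is a positive braid (an element of the submonoid of B_n generated by σ_1,…,σ_{n-1}), and Δ is not a prefix of A (i.e. there is no positive braid c with Δc = A). -/
/-- The generator `σᵢ` indexed by a natural number (`1` if out of range). -/
def sigmaN (n : ℕ) (i : ℕ) : BraidGroup n :=
  if h : i < n - 1 then braidGen n ⟨i, h⟩ else 1

/-- The descending run `σₖ σₖ₋₁ ⋯ σ₀` (0-indexed). -/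
def descRun (n k : ℕ) : BraidGroup n :=
  (((List.range (k + 1)).reverse).map (sigmaN n)).prod

/-- The half twist `Δ = σ₁(σ₂σ₁)(σ₃σ₂σ₁)⋯(σₙ₋₁σₙ₋₂⋯σ₁)` (written 1-indexed). -/
def halfTwist (n : ℕ) : BraidGroup n :=
  ((List.range (n - 1)).map (descRun n)).prod

/-- The braid `δ = σ₁σ₂⋯σₙ₋₁` (written 1-indexed). -/
def deltaBraid (n : ℕ) : BraidGroup n :=
  ((List.range (n - 1)).map (sigmaN n)).prod

/-- The braid `ε = σ₁δ = σ₁(σ₁σ₂⋯σₙ₋₁)` (written 1-indexed). -/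
def epsBraid (n : ℕ) : BraidGroup n := sigmaN n 0 * deltaBraid n

/-- The monoid of positive braids: the submonoid of `Bₙ` generated by `σ₁, …, σₙ₋₁`. -/
def posBraid (n : ℕ) : Submonoid (BraidGroup n) :=
  Submonoid.closure (Set.range (braidGen n))

/-- The prefix order on `Bₙ`: `a ≼ b` iff `a c = b` for some positive braid `c`. -/
def braidPrefix (n : ℕ) (a b : BraidGroup n) : Prop :=
  ∃ c ∈ posBraid n, a * c = b

/-!
Conjugation by `Δ` reverses the generators, `Δ σᵢ Δ⁻¹ = σₙ₋₂₋ᵢ` (0-indexed), so `Δ²` is central;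
moreover every `σᵢ` is a prefix of `Δ`, so `Δ σᵢ⁻¹` is positive. Hence `Δ²ᵏ β` is positive for
some `k`. The exponent sum is nonnegative on positive braids and positive on `Δ`, so the `p` with
`Δ^(-p) β` positive are bounded above. The greatest such `p` gives the normal form: `Δ` is not a
prefix of `Δ^(-p) β`, while for `q < p` the braid `Δ^(-q) β = Δ^(p - q) Δ^(-p) β` has `Δ` as a
prefix.
-/

/-- The factorisation is `β = dᵖ (d⁻ᵖ β)` for the greatest admissible `p`. -/
theorem existsUnique_zpow_mul_of_bddAbove {G : Type*} [Group G] (P : Submonoid G) {d β : G}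
    (hd : d ∈ P) (hne : ∃ p : ℤ, d ^ (-p) * β ∈ P)
    (hbdd : BddAbove {p : ℤ | d ^ (-p) * β ∈ P}) :
    ∃! pA : ℤ × G, pA.2 ∈ P ∧ β = d ^ pA.1 * pA.2 ∧ ¬ ∃ c ∈ P, d * c = pA.2 := by
  set S := {p : ℤ | d ^ (-p) * β ∈ P}
  have hmax : sSup S ∈ S := Int.csSup_mem hne hbdd
  refine ⟨(sSup S, d ^ (-sSup S) * β), ⟨hmax, by group, ?_⟩, ?_⟩
  · rintro ⟨c, hc, hdc⟩
    have hsucc : d ^ (-(sSup S + 1)) * β = c := by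
      rw [← mul_right_inj d, hdc]
      group
    have hsucc_mem : sSup S + 1 ∈ S := by
      change _ ∈ P
      rwa [hsucc]
    linarith [le_csSup hbdd hsucc_mem]
  · rintro ⟨q, B⟩ ⟨hB, rfl, hndvd⟩
    have hq : q ∈ S := by simpa [S] using hB
    obtain ⟨k, hk⟩ := Int.exists_add_of_le (le_csSup hbdd hq)
    rcases k with _ | k
    · simp [hk]
    · refine absurd ⟨d ^ k * (d ^ (-sSup S) * (d ^ q * B)), mul_mem (pow_mem hd k) hmax, ?_⟩ hndvd
      rw [hk]
      push_cast
      group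

namespace BraidGroup

variable {n : ℕ}

theorem sigmaN_commute {i j : ℕ} (h : i + 1 < j) : Commute (sigmaN n i) (sigmaN n j) := by
  by_cases hj : j < n - 1
  · have hi : i < n - 1 := by omega
    have hrel := PresentedGroup.mk_eq_mk_of_mul_inv_mem (rels := braidRels n)
      (Or.inl ⟨⟨i, hi⟩, ⟨j, hj⟩, h, rfl⟩)
    simpa [Commute, SemiconjBy, sigmaN, hi, hj, braidGen, PresentedGroup.of] using hrel
  · simp [sigmaN, hj]

theorem sigmaN_braid {i : ℕ} (h : i + 1 < n - 1) :
    sigmaN n i * sigmaN n (i + 1) * sigmaN n i =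
      sigmaN n (i + 1) * sigmaN n i * sigmaN n (i + 1) := by
  have hi : i < n - 1 := by omega
  have hrel := PresentedGroup.mk_eq_mk_of_mul_inv_mem (rels := braidRels n)
    (Or.inr ⟨⟨i, hi⟩, ⟨i + 1, h⟩, rfl, rfl⟩)
  simpa [sigmaN, hi, h, braidGen, PresentedGroup.of] using hrel

/-- `partialTwist n m = D₀ D₁ ⋯ Dₘ₋₁` with `Dₖ = descRun n k`; it is the half twist of the
first `m + 1` strands. -/
def partialTwist (n m : ℕ) : BraidGroup n := ((List.range m).map (descRun n)).prod

theorem halfTwist_eq_partialTwist : halfTwist n = partialTwist n (n - 1) := rfl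

theorem descRun_zero : descRun n 0 = sigmaN n 0 := by
  simp [descRun]

theorem descRun_succ (k : ℕ) : descRun n (k + 1) = sigmaN n (k + 1) * descRun n k := by
  simp [descRun, List.range_succ]

theorem partialTwist_zero : partialTwist n 0 = 1 := by
  simp [partialTwist]

theorem partialTwist_succ (m : ℕ) : partialTwist n (m + 1) = partialTwist n m * descRun n m := by
  simp [partialTwist, List.range_succ]

theorem braidGen_eq_sigmaN (i : Fin (n - 1)) : braidGen n i = sigmaN n i := by
  simp [sigmaN]

theorem sigmaN_mem_posBraid (i : ℕ) : sigmaN n i ∈ posBraid n := by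
  unfold sigmaN
  split
  · exact Submonoid.subset_closure ⟨_, rfl⟩
  · exact one_mem _

theorem descRun_mem_posBraid (k : ℕ) : descRun n k ∈ posBraid n := by
  induction k with
  | zero => exact descRun_zero (n := n) ▸ sigmaN_mem_posBraid 0
  | succ k ih => simpa [descRun_succ] using mul_mem (sigmaN_mem_posBraid _) ih

theorem partialTwist_mem_posBraid (m : ℕ) : partialTwist n m ∈ posBraid n := by
  induction m with
  | zero => simp [partialTwist_zero]
  | succ m ih => simpa [partialTwist_succ] using mul_mem ih (descRun_mem_posBraid m)

theorem descRun_mul_inv_sigmaN_zero_mem_posBraid (k : ℕ) :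
    descRun n k * (sigmaN n 0)⁻¹ ∈ posBraid n := by
  induction k with
  | zero => simp [descRun_zero]
  | succ k ih => simpa only [descRun_succ, mul_assoc] using mul_mem (sigmaN_mem_posBraid _) ih

theorem descRun_commute_sigmaN {k j : ℕ} (h : k + 2 ≤ j) : Commute (descRun n k) (sigmaN n j) := by
  induction k with
  | zero => simpa [descRun_zero] using sigmaN_commute (n := n) (by omega : 0 + 1 < j)
  | succ k ih =>
    rw [descRun_succ]
    exact (sigmaN_commute (by omega)).mul_left (ih (by omega))

theorem partialTwist_commute_sigmaN {m j : ℕ} (h : m + 1 ≤ j) :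
    Commute (partialTwist n m) (sigmaN n j) := by
  induction m with
  | zero => simp [partialTwist_zero]
  | succ m ih =>
    rw [partialTwist_succ]
    exact (ih (by omega)).mul_left (descRun_commute_sigmaN (by omega))

theorem descRun_succ_mul_sigmaN (k : ℕ) (hk : k + 1 ≤ n - 2) :
    descRun n (k + 1) * sigmaN n (k + 1) = sigmaN n k * descRun n (k + 1) := by
  cases k with
  | zero =>
    simp only [descRun_succ, descRun_zero, zero_add, ← mul_assoc]
    exact (sigmaN_braid (by omega)).symm
  | succ k =>
    have hbraid : sigmaN n (k + 1) * sigmaN n (k + 2) * sigmaN n (k + 1) =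
        sigmaN n (k + 2) * sigmaN n (k + 1) * sigmaN n (k + 2) := sigmaN_braid (by omega)
    calc descRun n (k + 2) * sigmaN n (k + 2)
        = sigmaN n (k + 2) * sigmaN n (k + 1) * (descRun n k * sigmaN n (k + 2)) := by
          simp only [descRun_succ, mul_assoc]
      _ = sigmaN n (k + 1) * sigmaN n (k + 2) * sigmaN n (k + 1) * descRun n k := by
          rw [(descRun_commute_sigmaN le_rfl).eq, ← mul_assoc, ← hbraid]
      _ = sigmaN n (k + 1) * descRun n (k + 2) := by
          simp only [descRun_succ, mul_assoc]

theorem descRun_mul_sigmaN_succ {k i : ℕ} (hi : i + 1 ≤ k) (hk : k ≤ n - 2) :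
    descRun n k * sigmaN n (i + 1) = sigmaN n i * descRun n k := by
  induction k with
  | zero => omega
  | succ k ih =>
    rcases Nat.lt_or_ge i k with hlt | hge
    · rw [descRun_succ, mul_assoc, ih hlt (by omega), ← mul_assoc,
        ← (sigmaN_commute (n := n) (i := i) (j := k + 1) (by omega)).eq, mul_assoc]
    · obtain rfl : i = k := by omega
      exact descRun_succ_mul_sigmaN i hk

theorem sigmaN_mul_descRun_mul_descRun (k : ℕ) (hk : k + 1 ≤ n - 2) :
    sigmaN n (k + 1) * descRun n k * descRun n (k + 1) =
      descRun n k * descRun n (k + 1) * sigmaN n 0 := by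
  induction k with
  | zero =>
    simp only [descRun_succ, descRun_zero, zero_add, ← mul_assoc]
    rw [sigmaN_braid (by omega)]
  | succ k ih =>
    have hbraid : sigmaN n (k + 1) * sigmaN n (k + 2) * sigmaN n (k + 1) =
        sigmaN n (k + 2) * sigmaN n (k + 1) * sigmaN n (k + 2) := sigmaN_braid (by omega)
    have hcomm := (descRun_commute_sigmaN (n := n) (k := k) (j := k + 2) le_rfl).eq
    calc sigmaN n (k + 2) * descRun n (k + 1) * descRun n (k + 2)
        = sigmaN n (k + 2) * sigmaN n (k + 1) * (descRun n k * sigmaN n (k + 2)) *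
            descRun n (k + 1) := by
          simp only [descRun_succ (k + 1), descRun_succ k, mul_assoc]
      _ = sigmaN n (k + 1) * sigmaN n (k + 2) *
            (sigmaN n (k + 1) * descRun n k * descRun n (k + 1)) := by
          rw [hcomm]; simp only [← mul_assoc]; rw [← hbraid]
      _ = sigmaN n (k + 1) * (sigmaN n (k + 2) * descRun n k) * descRun n (k + 1) *
            sigmaN n 0 := by
          rw [ih (by omega)]; simp only [mul_assoc]
      _ = descRun n (k + 1) * descRun n (k + 2) * sigmaN n 0 := by
          rw [← hcomm]; simp only [descRun_succ, mul_assoc]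

theorem partialTwist_mul_sigmaN {m j k : ℕ} (hjk : j + k + 1 = m) (hm : m ≤ n - 1) :
    partialTwist n m * sigmaN n j = sigmaN n k * partialTwist n m := by
  induction m generalizing j k with
  | zero => omega
  | succ m ih =>
    rcases j with _ | j
    · obtain rfl : k = m := by omega
      rcases k with _ | k
      · simp [partialTwist_succ, partialTwist_zero, descRun_zero]
      · calc partialTwist n (k + 2) * sigmaN n 0
            = partialTwist n k * (descRun n k * descRun n (k + 1) * sigmaN n 0) := by
              simp only [partialTwist_succ, mul_assoc]
          _ = sigmaN n (k + 1) * partialTwist n (k + 2) := by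
              rw [← sigmaN_mul_descRun_mul_descRun k (by omega), ← mul_assoc, ← mul_assoc,
                (partialTwist_commute_sigmaN le_rfl).eq]
              simp only [partialTwist_succ, mul_assoc]
    · rw [partialTwist_succ, mul_assoc, descRun_mul_sigmaN_succ (k := m) (by omega) (by omega),
        ← mul_assoc, ih (j := j) (k := k) (by omega) (by omega), mul_assoc]

theorem halfTwist_mul_sigmaN {i : ℕ} (hi : i < n - 1) :
    halfTwist n * sigmaN n i = sigmaN n (n - 2 - i) * halfTwist n :=
  partialTwist_mul_sigmaN (by omega) le_rfl

theorem exists_partialTwist_eq_sigmaN_mul {m j : ℕ} (hj : j < m) (hm : m ≤ n - 1) :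
    ∃ Q ∈ posBraid n, partialTwist n m = sigmaN n j * Q := by
  induction m with
  | zero => omega
  | succ m ih =>
    rcases Nat.lt_or_ge j m with hlt | hge
    · obtain ⟨Q, hQ, hEq⟩ := ih hlt (by omega)
      exact ⟨Q * descRun n m, mul_mem hQ (descRun_mem_posBraid m), by
        rw [partialTwist_succ, hEq, mul_assoc]⟩
    · obtain rfl : j = m := by omega
      refine ⟨partialTwist n (j + 1) * (sigmaN n 0)⁻¹, ?_, ?_⟩
      · simpa only [partialTwist_succ, mul_assoc] using
          mul_mem (partialTwist_mem_posBraid j) (descRun_mul_inv_sigmaN_zero_mem_posBraid j)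
      · rw [← mul_assoc, ← partialTwist_mul_sigmaN (j := 0) (by omega) hm, mul_inv_cancel_right]

theorem halfTwist_mem_posBraid : halfTwist n ∈ posBraid n := partialTwist_mem_posBraid (n - 1)

theorem halfTwist_mul_inv_sigmaN_mem_posBraid {i : ℕ} (hi : i < n - 1) :
    halfTwist n * (sigmaN n i)⁻¹ ∈ posBraid n := by
  obtain ⟨Q, hQ, hΔ⟩ :=
    exists_partialTwist_eq_sigmaN_mul (n := n) (j := n - 2 - i) (by omega) le_rfl
  rw [← halfTwist_eq_partialTwist] at hΔ
  have hQσ : Q * sigmaN n i = halfTwist n := by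
    apply mul_left_cancel (a := sigmaN n (n - 2 - i))
    rw [← mul_assoc, ← hΔ, halfTwist_mul_sigmaN hi]
  rwa [← hQσ, mul_inv_cancel_right]

theorem halfTwist_sq_commute_sigmaN {i : ℕ} (hi : i < n - 1) :
    Commute (halfTwist n ^ 2) (sigmaN n i) := by
  have hrev : n - 2 - (n - 2 - i) = i := by omega
  calc halfTwist n ^ 2 * sigmaN n i
      = halfTwist n * sigmaN n (n - 2 - i) * halfTwist n := by
        rw [sq, mul_assoc, halfTwist_mul_sigmaN hi, mul_assoc]
    _ = sigmaN n i * halfTwist n ^ 2 := by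
        rw [halfTwist_mul_sigmaN (by omega), hrev, sq, mul_assoc]

theorem halfTwist_sq_mem_center : halfTwist n ^ 2 ∈ Subgroup.center (BraidGroup n) := by
  have hgen : ⊤ ≤ Subgroup.centralizer {halfTwist n ^ 2} := by
    rw [← PresentedGroup.closure_range_of, Subgroup.closure_le]
    rintro _ ⟨i, rfl⟩
    change braidGen n i ∈ _
    rw [braidGen_eq_sigmaN]
    exact Subgroup.mem_centralizer_singleton_iff.mpr (halfTwist_sq_commute_sigmaN i.isLt).eq.symm
  exact Subgroup.mem_center_iff.mpr fun g =>
    Subgroup.mem_centralizer_singleton_iff.mp (hgen (Subgroup.mem_top g))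

theorem exists_halfTwist_sq_pow_mul_mem_posBraid (β : BraidGroup n) :
    ∃ k : ℕ, (halfTwist n ^ 2) ^ k * β ∈ posBraid n := by
  have hβ : β ∈ Subgroup.closure (Set.range (PresentedGroup.of (rels := braidRels n))) := by
    simp
  induction hβ using Subgroup.closure_induction'' with
  | mem _ hx =>
    obtain ⟨i, rfl⟩ := hx
    exact ⟨0, by rw [pow_zero, one_mul]; exact Submonoid.subset_closure ⟨i, rfl⟩⟩
  | inv_mem _ hx =>
    obtain ⟨i, rfl⟩ := hx
    refine ⟨1, ?_⟩
    have hΔσ := halfTwist_mul_inv_sigmaN_mem_posBraid i.isLt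
    rw [← braidGen_eq_sigmaN] at hΔσ
    rw [pow_one, sq, mul_assoc]
    exact mul_mem halfTwist_mem_posBraid hΔσ
  | one => exact ⟨0, by simp⟩
  | mul x y _ _ hx hy =>
    obtain ⟨a, ha⟩ := hx
    obtain ⟨b, hb⟩ := hy
    refine ⟨a + b, ?_⟩
    have hcomm := Subgroup.mem_center_iff.mp (pow_mem halfTwist_sq_mem_center b) x
    rw [pow_add, mul_assoc, ← mul_assoc _ x, ← hcomm, mul_assoc, ← mul_assoc]
    exact mul_mem ha hb

def exponentSum (n : ℕ) : BraidGroup n →* Multiplicative ℤ :=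
  PresentedGroup.toGroup (f := fun _ => Multiplicative.ofAdd 1) <| by
    rintro _ (⟨i, j, -, rfl⟩ | ⟨i, j, -, rfl⟩) <;>
      simp only [map_mul, map_inv, FreeGroup.lift_apply_of] <;> group

theorem exponentSum_sigmaN {i : ℕ} (hi : i < n - 1) : exponentSum n (sigmaN n i) = .ofAdd 1 := by
  simp [sigmaN, hi, braidGen, exponentSum]

theorem exponentSum_nonneg {A : BraidGroup n} (hA : A ∈ posBraid n) :
    0 ≤ (exponentSum n A).toAdd := by
  induction hA using Submonoid.closure_induction with
  | mem _ hx =>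
    obtain ⟨i, rfl⟩ := hx
    simp [braidGen_eq_sigmaN, exponentSum_sigmaN i.isLt]
  | one => simp
  | mul x y _ _ hx hy => simpa using add_nonneg hx hy

theorem one_le_exponentSum_halfTwist (hn : 2 ≤ n) : 1 ≤ (exponentSum n (halfTwist n)).toAdd := by
  obtain ⟨Q, hQ, hΔ⟩ := exists_partialTwist_eq_sigmaN_mul (n := n) (j := 0) (by omega) le_rfl
  rw [halfTwist_eq_partialTwist, hΔ, map_mul, exponentSum_sigmaN (by omega), toAdd_mul]
  simpa using exponentSum_nonneg hQ

theorem bddAbove_setOf_halfTwist_zpow_neg_mul_mem (hn : 2 ≤ n) (β : BraidGroup n) :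
    BddAbove {p : ℤ | halfTwist n ^ (-p) * β ∈ posBraid n} := by
  refine ⟨max (exponentSum n β).toAdd 0, fun p hp => ?_⟩
  have hlen := exponentSum_nonneg hp
  simp only [map_mul, map_zpow, toAdd_mul, toAdd_zpow, smul_eq_mul] at hlen
  nlinarith [one_le_exponentSum_halfTwist hn, le_max_left (exponentSum n β).toAdd 0,
    le_max_right (exponentSum n β).toAdd 0]

end BraidGroup

/-- (Garside normal form) Every braid `β ∈ Bₙ` can be written uniquely as `β = Δᵖ A` with
`p ∈ ℤ`, `A` a positive braid, and `Δ` not a prefix of `A`. -/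
theorem garside_normal_form (n : ℕ) (hn : 2 ≤ n) (β : BraidGroup n) :
    ∃! pA : ℤ × BraidGroup n,
      pA.2 ∈ posBraid n ∧ β = halfTwist n ^ pA.1 * pA.2 ∧
        ¬ braidPrefix n (halfTwist n) pA.2 := by
  obtain ⟨k, hk⟩ := BraidGroup.exists_halfTwist_sq_pow_mul_mem_posBraid β
  refine existsUnique_zpow_mul_of_bddAbove (posBraid n) BraidGroup.halfTwist_mem_posBraid
    ⟨-(2 * k), ?_⟩ (BraidGroup.bddAbove_setOf_halfTwist_zpow_neg_mul_mem hn β)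
  rwa [neg_neg, zpow_mul, zpow_ofNat, zpow_natCast]
end
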